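/- arXiv:2202.04957 — 3 statements merged into one kernel-verified Lean document; each statement's English description precedes it below -/
import Mathlib

section
/- Let G be a finite simple graph on n vertices with Laplacian matrix L, let a, b be twin vertices of G, let M = (e_a - e_b)(e_a - e_b)^T, and let α ∈ ℝ. Then for all t ∈ ℝ, exp(-i t (L + α M)) = exp(-i t L) · (I + (1/2)(exp(-2 i α t) - 1) M). -/
/-!
Twin-ness makes `w = e_a - e_b` an eigenvector of the symmetric matrix `L`, so `L` commutes with
`M = w wᵀ`, and `exp(-it(L + αM)) = exp(-itL) · exp(-2iαt · M/2)`. Since `M² = 2M`, the matrix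
`M/2` is idempotent, and for an idempotent `P` the exponential series collapses to
`exp(sP) = 1 + (eˢ - 1) P`.
-/

theorem NormedSpace.exp_smul_of_isIdempotentElem {𝕂 𝔸 : Type*} [RCLike 𝕂] [Ring 𝔸]
    [Algebra 𝕂 𝔸] [TopologicalSpace 𝔸] [IsTopologicalRing 𝔸] [ContinuousSMul 𝕂 𝔸] [T2Space 𝔸]
    {P : 𝔸} (hP : IsIdempotentElem P) (s : 𝕂) :
    exp (s • P) = 1 + (exp s - 1) • P := by
  have hpow : ∀ k, (s • P) ^ k = s ^ k • P + (Pi.single 0 (1 - P) : ℕ → 𝔸) k := by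
    rintro (_ | k)
    · simp
    · simp [smul_pow, hP.pow_succ_eq]
  have hsum : HasSum (fun k : ℕ => (k.factorial⁻¹ : 𝕂) • (s • P) ^ k) (exp s • P + (1 - P)) := by
    simp_rw [hpow, smul_add, ← smul_assoc, smul_eq_mul]
    refine ((exp_series_hasSum_exp' (𝕂 := 𝕂) s).smul_const P).add ?_
    convert hasSum_pi_single 0 (1 - P) using 1
    ext (_ | k) <;> simp
  rw [exp_eq_tsum 𝕂]
  exact hsum.tsum_eq.trans (by module)

open Matrix Complex

namespace Matrix

variable {n R : Type*} [Fintype n] [CommRing R]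

theorem commute_vecMulVec_self_of_mulVec_eq_smul {A : Matrix n n R} (hA : A.IsSymm)
    {w : n → R} {c : R} (hw : A *ᵥ w = c • w) : Commute A (vecMulVec w w) := by
  have hw' : w ᵥ* A = c • w := by rw [← mulVec_transpose, hA.eq, hw]
  change A * vecMulVec w w = vecMulVec w w * A
  rw [mul_vecMulVec, vecMulVec_mul, hw, hw', smul_vecMulVec, vecMulVec_smul]

theorem vecMulVec_self_mul_self (w : n → R) :
    vecMulVec w w * vecMulVec w w = (w ⬝ᵥ w) • vecMulVec w w := by
  rw [vecMulVec_mul_vecMulVec, vecMulVec_smul]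

theorem isIdempotentElem_inv_smul_vecMulVec_self {K : Type*} [Field K] {w : n → K}
    (hw : w ⬝ᵥ w ≠ 0) : IsIdempotentElem ((w ⬝ᵥ w)⁻¹ • vecMulVec w w) := by
  rw [IsIdempotentElem, smul_mul_smul_comm, vecMulVec_self_mul_self, smul_smul,
    inv_mul_cancel_right₀ hw]

end Matrix

theorem dotProduct_single_sub_single_self {n R : Type*} [Fintype n] [DecidableEq n] [Ring R]
    {a b : n} (hab : a ≠ b) :
    ((Pi.single a 1 : n → R) - Pi.single b 1) ⬝ᵥ (Pi.single a 1 - Pi.single b 1) = 2 := by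
  norm_num [dotProduct_sub, hab, hab.symm]

namespace SimpleGraph

variable {V : Type*} [Fintype V] [DecidableEq V] (G : SimpleGraph V) [DecidableRel G.Adj]
  {a b : V}

theorem degree_eq_of_twin (htwin : ∀ v, v ≠ a → v ≠ b → (G.Adj a v ↔ G.Adj b v)) :
    G.degree a = G.degree b := by
  rw [← Nat.cast_id (G.degree a), ← Nat.cast_id (G.degree b), degree_eq_sum_if_adj,
    degree_eq_sum_if_adj, ← Equiv.sum_comp (Equiv.swap a b)]
  refine Finset.sum_congr rfl fun v _ => ?_
  rcases eq_or_ne v a with rfl | hva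
  · simp [G.adj_comm]
  rcases eq_or_ne v b with rfl | hvb
  · simp
  simp [Equiv.swap_apply_of_ne_of_ne hva hvb, htwin v hva hvb]

theorem lapMatrix_mulVec_single_sub_single_of_twin {R : Type*} [Ring R] (hab : a ≠ b)
    (htwin : ∀ v, v ≠ a → v ≠ b → (G.Adj a v ↔ G.Adj b v)) :
    G.lapMatrix R *ᵥ (Pi.single a 1 - Pi.single b 1) =
      ((G.degree a : R) + if G.Adj a b then 1 else 0) • (Pi.single a 1 - Pi.single b 1) := by
  ext v
  rw [lapMatrix_mulVec_apply]
  simp only [Pi.sub_apply, Finset.sum_sub_distrib, Pi.smul_apply, smul_eq_mul]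
  rcases eq_or_ne v a with rfl | hva
  · simp [hab, G.adj_comm]
  rcases eq_or_ne v b with rfl | hvb
  · simp [hab, G.adj_comm, G.degree_eq_of_twin htwin]
    abel
  simp [hva, hvb, G.adj_comm, htwin v hva hvb]

end SimpleGraph

theorem transition_matrix_of_twin_edge_perturbation
    {n : ℕ} (G : SimpleGraph (Fin n)) [DecidableRel G.Adj]
    (a b : Fin n) (hab : a ≠ b)
    (htwin : ∀ v : Fin n, v ≠ a → v ≠ b → (G.Adj a v ↔ G.Adj b v)) (α : ℝ) :
    ∀ t : ℝ,
      NormedSpace.exp ((-(Complex.I * (t : ℂ))) •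
          (G.lapMatrix ℂ + (α : ℂ) •
            vecMulVec ((Pi.single a 1 : Fin n → ℂ) - Pi.single b 1)
              ((Pi.single a 1 : Fin n → ℂ) - Pi.single b 1)))
        = NormedSpace.exp ((-(Complex.I * (t : ℂ))) • G.lapMatrix ℂ) *
          (1 + ((1 / 2 : ℂ) * (Complex.exp (-(2 * Complex.I * (α : ℂ) * (t : ℂ))) - 1)) •
            vecMulVec ((Pi.single a 1 : Fin n → ℂ) - Pi.single b 1)
              ((Pi.single a 1 : Fin n → ℂ) - Pi.single b 1)) := by
  intro t
  set w : Fin n → ℂ := Pi.single a 1 - Pi.single b 1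
  set M := vecMulVec w w
  have hw : w ⬝ᵥ w = 2 := dotProduct_single_sub_single_self hab
  have hcomm : Commute (G.lapMatrix ℂ) M :=
    commute_vecMulVec_self_of_mulVec_eq_smul (G.isSymm_lapMatrix (R := ℂ))
      (G.lapMatrix_mulVec_single_sub_single_of_twin hab htwin)
  have hidem : IsIdempotentElem ((2 : ℂ)⁻¹ • M) := by
    have := isIdempotentElem_inv_smul_vecMulVec_self (w := w) (by rw [hw]; exact two_ne_zero)
    rwa [hw] at this
  calc NormedSpace.exp (-(I * t) • (G.lapMatrix ℂ + (α : ℂ) • M))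
      = NormedSpace.exp (-(I * t) • G.lapMatrix ℂ + -(2 * I * α * t) • ((2 : ℂ)⁻¹ • M)) := by
        congr 1; module
    _ = NormedSpace.exp (-(I * t) • G.lapMatrix ℂ) *
          NormedSpace.exp (-(2 * I * α * t) • ((2 : ℂ)⁻¹ • M)) :=
        Matrix.exp_add_of_commute _ _ (((hcomm.smul_right _).smul_right _).smul_left _)
    _ = _ := by
        rw [NormedSpace.exp_smul_of_isIdempotentElem hidem, ← Complex.exp_eq_exp_ℂ]
        congr 1
        module
end

section
/- Let G be a graph with Laplacian L, a, b twin vertices, M = (e_a - e_b)(e_a - e_b)^T, α ∈ ℝ. For any p, q both distinct from a and b and any t ∈ ℝ, exp(-i t (L + α M))(e_p - e_q) = exp(-i t L)(e_p - e_q). Hence if G has Pair-LPST from e_p - e_q to e_c - e_d at time τ, so does G + α{a,b}. -/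
/-!
Vectors `x` with `x a = x b` form a subspace that `M` annihilates and that `L` preserves, because
swapping the twins `a` and `b` maps the neighbourhood of `a` onto that of `b`. So `L + αM` agrees
with `L` on this subspace, hence so do all their powers, and the exponential series of
`-it(L + αM)` and `-itL` agree on `e_p - e_q`, which lies in it.
-/

open Matrix Complex

namespace Matrix

variable {ι : Type*} [Fintype ι] [DecidableEq ι]

theorem pow_mulVec_eq_of_invariant {R : Type*} [Semiring R] {A B : Matrix ι ι R}
    {S : Set (ι → R)} (hA : ∀ x ∈ S, A *ᵥ x ∈ S) (hAB : ∀ x ∈ S, B *ᵥ x = A *ᵥ x) (k : ℕ) :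
    ∀ x ∈ S, (B ^ k) *ᵥ x = (A ^ k) *ᵥ x ∧ (A ^ k) *ᵥ x ∈ S := by
  induction k with
  | zero => simp
  | succ k ih =>
    intro x hx
    obtain ⟨hBA, hmem⟩ := ih x hx
    simp only [pow_succ', ← mulVec_mulVec, hBA]
    exact ⟨hAB _ hmem, hA _ hmem⟩

open scoped Norms.Operator in
theorem exp_mulVec_eq_of_pow_mulVec_eq {𝕂 : Type*} [RCLike 𝕂] {A B : Matrix ι ι 𝕂} {v : ι → 𝕂}
    (h : ∀ k : ℕ, (A ^ k) *ᵥ v = (B ^ k) *ᵥ v) :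
    NormedSpace.exp A *ᵥ v = NormedSpace.exp B *ᵥ v := by
  have hasSum_exp_mulVec (C : Matrix ι ι 𝕂) :
      HasSum (fun k : ℕ => ((k.factorial⁻¹ : 𝕂) • C ^ k) *ᵥ v) (NormedSpace.exp C *ᵥ v) :=
    (NormedSpace.exp_series_hasSum_exp' (𝕂 := 𝕂) C).map (mulVec.addMonoidHomLeft v)
      (continuous_id.matrix_mulVec continuous_const)
  refine (hasSum_exp_mulVec A).unique ?_
  simpa only [smul_mulVec, h] using hasSum_exp_mulVec B

theorem vecMulVec_single_sub_single_mulVec {R : Type*} [CommRing R] {a b : ι} {x : ι → R}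
    (hx : x a = x b) :
    vecMulVec (Pi.single a 1 - Pi.single b 1) (Pi.single a 1 - Pi.single b 1) *ᵥ x = 0 := by
  rw [vecMulVec_mulVec, sub_dotProduct, single_one_dotProduct, single_one_dotProduct, hx,
    sub_self, MulOpposite.op_zero, zero_smul]

end Matrix

namespace SimpleGraph

variable {V : Type*} [Fintype V] [DecidableEq V] {G : SimpleGraph V} [DecidableRel G.Adj]
  {a b : V}

theorem neighborFinset_map_swap_of_twin
    (htwin : ∀ v, v ≠ a → v ≠ b → (G.Adj a v ↔ G.Adj b v)) :
    (G.neighborFinset a).map (Equiv.swap a b).toEmbedding = G.neighborFinset b := by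
  ext u
  simp only [Finset.mem_map_equiv, Equiv.symm_swap, mem_neighborFinset]
  rcases eq_or_ne u a with rfl | hua
  · simp [G.adj_comm]
  rcases eq_or_ne u b with rfl | hub
  · simp
  · rw [Equiv.swap_apply_of_ne_of_ne hua hub, htwin u hua hub]

theorem lapMatrix_mulVec_apply_eq_of_twin {R : Type*} [NonAssocRing R]
    (htwin : ∀ v, v ≠ a → v ≠ b → (G.Adj a v ↔ G.Adj b v)) {x : V → R} (hx : x a = x b) :
    (G.lapMatrix R *ᵥ x) a = (G.lapMatrix R *ᵥ x) b := by
  have hN := neighborFinset_map_swap_of_twin htwin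
  have hdeg : G.degree a = G.degree b := by
    rw [← card_neighborFinset_eq_degree, ← card_neighborFinset_eq_degree, ← hN, Finset.card_map]
  have hsum : ∑ u ∈ G.neighborFinset a, x u = ∑ u ∈ G.neighborFinset b, x u := by
    rw [← hN, Finset.sum_map]
    exact Finset.sum_congr rfl fun u _ => (Equiv.apply_swap_eq_self hx u).symm
  rw [lapMatrix_mulVec_apply, lapMatrix_mulVec_apply, hdeg, hsum, hx]

end SimpleGraph

theorem pair_lpst_preserved_under_twin_perturbation_case_c_general
    {n : ℕ} (G : SimpleGraph (Fin n)) [DecidableRel G.Adj]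
    (a b p q : Fin n)
    (hpa : p ≠ a) (hpb : p ≠ b) (hqa : q ≠ a) (hqb : q ≠ b)
    (htwin : ∀ v : Fin n, v ≠ a → v ≠ b → (G.Adj a v ↔ G.Adj b v)) (α : ℝ) :
    (∀ t : ℝ,
      (NormedSpace.exp ((-(Complex.I * (t : ℂ))) •
          (G.lapMatrix ℂ + (α : ℂ) •
            vecMulVec ((Pi.single a 1 : Fin n → ℂ) - Pi.single b 1)
              ((Pi.single a 1 : Fin n → ℂ) - Pi.single b 1)))).mulVec
          ((Pi.single p 1 : Fin n → ℂ) - Pi.single q 1)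
        = (NormedSpace.exp ((-(Complex.I * (t : ℂ))) • G.lapMatrix ℂ)).mulVec
            ((Pi.single p 1 : Fin n → ℂ) - Pi.single q 1))
    ∧ ∀ (τ : ℝ) (c d : Fin n) (γ : ℂ), ‖γ‖ = 1 →
        (NormedSpace.exp ((-(Complex.I * (τ : ℂ))) • G.lapMatrix ℂ)).mulVec
            ((Pi.single p 1 : Fin n → ℂ) - Pi.single q 1)
          = γ • ((Pi.single c 1 : Fin n → ℂ) - Pi.single d 1) →
        (NormedSpace.exp ((-(Complex.I * (τ : ℂ))) •
            (G.lapMatrix ℂ + (α : ℂ) •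
              vecMulVec ((Pi.single a 1 : Fin n → ℂ) - Pi.single b 1)
                ((Pi.single a 1 : Fin n → ℂ) - Pi.single b 1)))).mulVec
            ((Pi.single p 1 : Fin n → ℂ) - Pi.single q 1)
          = γ • ((Pi.single c 1 : Fin n → ℂ) - Pi.single d 1) := by
  set L := G.lapMatrix ℂ
  set M := vecMulVec ((Pi.single a 1 : Fin n → ℂ) - Pi.single b 1)
    ((Pi.single a 1 : Fin n → ℂ) - Pi.single b 1)
  set v := (Pi.single p 1 : Fin n → ℂ) - Pi.single q 1
  have hv : v a = v b := by simp [v, hpa, hpb, hqa, hqb]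
  have hL : ∀ x ∈ {x : Fin n → ℂ | x a = x b}, L *ᵥ x ∈ {x : Fin n → ℂ | x a = x b} :=
    fun _ hx => SimpleGraph.lapMatrix_mulVec_apply_eq_of_twin htwin hx
  have hLM : ∀ x ∈ {x : Fin n → ℂ | x a = x b}, (L + (α : ℂ) • M) *ᵥ x = L *ᵥ x := fun x hx => by
    rw [add_mulVec, smul_mulVec, vecMulVec_single_sub_single_mulVec hx, smul_zero, add_zero]
  have key (t : ℝ) : NormedSpace.exp ((-(I * t)) • (L + (α : ℂ) • M)) *ᵥ v
      = NormedSpace.exp ((-(I * t)) • L) *ᵥ v :=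
    exp_mulVec_eq_of_pow_mulVec_eq fun k => by
      rw [smul_pow, smul_pow, smul_mulVec, smul_mulVec,
        (pow_mulVec_eq_of_invariant hL hLM k v hv).1]
  exact ⟨key, fun τ c d γ _ hτ => (key τ).trans hτ⟩

theorem pair_lpst_preserved_under_twin_perturbation_case_c
    {n : ℕ} (G : SimpleGraph (Fin n)) [DecidableRel G.Adj]
    (a b p q : Fin n) (hab : a ≠ b)
    (hpa : p ≠ a) (hpb : p ≠ b) (hqa : q ≠ a) (hqb : q ≠ b)
    (htwin : ∀ v : Fin n, v ≠ a → v ≠ b → (G.Adj a v ↔ G.Adj b v)) (α : ℝ) :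
    (∀ t : ℝ,
      (NormedSpace.exp ((-(Complex.I * (t : ℂ))) •
          (G.lapMatrix ℂ + (α : ℂ) •
            vecMulVec ((Pi.single a 1 : Fin n → ℂ) - Pi.single b 1)
              ((Pi.single a 1 : Fin n → ℂ) - Pi.single b 1)))).mulVec
          ((Pi.single p 1 : Fin n → ℂ) - Pi.single q 1)
        = (NormedSpace.exp ((-(Complex.I * (t : ℂ))) • G.lapMatrix ℂ)).mulVec
            ((Pi.single p 1 : Fin n → ℂ) - Pi.single q 1))
    ∧ ∀ (τ : ℝ) (c d : Fin n) (γ : ℂ), ‖γ‖ = 1 →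
        (NormedSpace.exp ((-(Complex.I * (τ : ℂ))) • G.lapMatrix ℂ)).mulVec
            ((Pi.single p 1 : Fin n → ℂ) - Pi.single q 1)
          = γ • ((Pi.single c 1 : Fin n → ℂ) - Pi.single d 1) →
        (NormedSpace.exp ((-(Complex.I * (τ : ℂ))) •
            (G.lapMatrix ℂ + (α : ℂ) •
              vecMulVec ((Pi.single a 1 : Fin n → ℂ) - Pi.single b 1)
                ((Pi.single a 1 : Fin n → ℂ) - Pi.single b 1)))).mulVec
            ((Pi.single p 1 : Fin n → ℂ) - Pi.single q 1)
          = γ • ((Pi.single c 1 : Fin n → ℂ) - Pi.single d 1) :=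
  pair_lpst_preserved_under_twin_perturbation_case_c_general G a b p q hpa hpb hqa hqb htwin α
end

section
/- Let K_n be the complete graph on n ≥ 3 vertices and let a ≠ b be two vertices. The graph K_n - {a,b} obtained by deleting the edge ab has Laplacian perfect pair state transfer from e_a - e_q to e_b - e_q at time τ = π/2 for every vertex q ∉ {a,b}: explicitly, exp(-i(π/2)(L - M))(e_b - e_q) = γ(e_a - e_q) for some complex γ with |γ| = 1, where L is the Laplacian of K_n and M = (e_a - e_b)(e_a - e_b)^T. -/
open Matrix Complex

/-!
With `u = e_a - e_b` and `w = e_a + e_b - 2 e_q`, both vectors have coordinate sum zero, so the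
Laplacian `L = nI - J` of `K_n` acts on them as multiplication by `n`, while `M = u uᵀ` sends `u` to
`2 u` and `w` to `0`. Hence `u` and `w` are eigenvectors of `L - M` with eigenvalues `n - 2` and
`n`. Since `e_b - e_q = (w - u) / 2` and `e_a - e_q = (w + u) / 2`, it suffices that at time `π / 2`
the two eigencomponents acquire phases differing by `exp (-iπ (n - 2) / 2) / exp (-iπ n / 2) = -1`.
-/

open scoped Norms.Operator in
theorem Matrix.exp_mulVec_of_mulVec_eq_smul {𝕂 m : Type*} [RCLike 𝕂] [Fintype m] [DecidableEq m]
    {A : Matrix m m 𝕂} {v : m → 𝕂} {μ : 𝕂} (h : A *ᵥ v = μ • v) :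
    NormedSpace.exp A *ᵥ v = NormedSpace.exp μ • v := by
  have hpow (k : ℕ) : A ^ k *ᵥ v = μ ^ k • v := by
    induction k with
    | zero => simp
    | succ k ih => rw [pow_succ, ← mulVec_mulVec, h, mulVec_smul, ih, smul_smul, pow_succ']
  let applyTo : Matrix m m 𝕂 →L[𝕂] (m → 𝕂) :=
    LinearMap.toContinuousLinearMap
      { toFun := fun B => B *ᵥ v
        map_add' := fun B C => add_mulVec B C v
        map_smul' := fun c B => smul_mulVec c B v }
  calc NormedSpace.exp A *ᵥ v
      = applyTo (∑' k : ℕ, (k.factorial⁻¹ : 𝕂) • A ^ k) := by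
        rw [NormedSpace.exp_eq_tsum 𝕂]; rfl
    _ = ∑' k : ℕ, ((k.factorial⁻¹ : 𝕂) • μ ^ k) • v := by
        rw [applyTo.map_tsum (NormedSpace.expSeries_summable' (𝕂 := 𝕂) A)]
        refine tsum_congr fun k => ?_
        change ((k.factorial⁻¹ : 𝕂) • A ^ k) *ᵥ v = _
        rw [smul_mulVec, hpow, smul_smul, smul_eq_mul]
    _ = NormedSpace.exp μ • v := by
        rw [(NormedSpace.expSeries_summable' (𝕂 := 𝕂) μ).tsum_smul_const, NormedSpace.exp_eq_tsum 𝕂]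

theorem SimpleGraph.lapMatrix_top_mulVec_of_sum_eq_zero {V R : Type*} [Fintype V] [DecidableEq V]
    [Ring R] {x : V → R} (hx : ∑ i, x i = 0) :
    (⊤ : SimpleGraph V).lapMatrix R *ᵥ x = (Fintype.card V : R) • x := by
  ext v
  have hcompl : ∑ u ∈ {v}ᶜ, x u = -x v := by
    rw [eq_neg_iff_add_eq_zero, ← hx, ← Finset.sum_compl_add_sum {v} x, Finset.sum_singleton]
  rw [lapMatrix_mulVec_apply, neighborFinset_top, hcompl, complete_graph_degree,
    Nat.cast_sub (Fintype.card_pos_iff.2 ⟨v⟩), Nat.cast_one, Pi.smul_apply, smul_eq_mul,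
    sub_neg_eq_add, sub_one_mul, sub_add_cancel]

theorem SimpleGraph.lapMatrix_top_sub_vecMulVec_mulVec {V R : Type*} [Fintype V] [DecidableEq V]
    [CommRing R] (u : V → R) {x : V → R} (hx : ∑ i, x i = 0) :
    ((⊤ : SimpleGraph V).lapMatrix R - vecMulVec u u) *ᵥ x =
      (Fintype.card V : R) • x - (u ⬝ᵥ x) • u := by
  rw [sub_mulVec, lapMatrix_top_mulVec_of_sum_eq_zero hx, vecMulVec_mulVec, op_smul_eq_smul]

theorem Matrix.exp_neg_I_pi_div_two_smul_mulVec_of_eigenvalue_gap {m : Type*} [Fintype m]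
    [DecidableEq m] {A : Matrix m m ℂ} {x y : m → ℂ} {μ : ℂ}
    (hsub : A *ᵥ (x - y) = (μ - 2) • (x - y)) (hadd : A *ᵥ (x + y) = μ • (x + y)) :
    NormedSpace.exp ((-(I * ((Real.pi / 2 : ℝ) : ℂ))) • A) *ᵥ y =
      Complex.exp (-(I * ((Real.pi / 2 : ℝ) : ℂ)) * μ) • x := by
  set c : ℂ := -(I * ((Real.pi / 2 : ℝ) : ℂ))
  have hexp_add := exp_mulVec_of_mulVec_eq_smul (A := c • A) (μ := c * μ)
    (by rw [smul_mulVec, hadd, smul_smul])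
  have hexp_sub := exp_mulVec_of_mulVec_eq_smul (A := c • A) (μ := c * (μ - 2))
    (by rw [smul_mulVec, hsub, smul_smul])
  have hflip : NormedSpace.exp (c * (μ - 2)) = -NormedSpace.exp (c * μ) := by
    rw [← Complex.exp_eq_exp_ℂ, show c * (μ - 2) = c * μ + Real.pi * I by push_cast [c]; ring,
      Complex.exp_add, Complex.exp_pi_mul_I, mul_neg_one]
  have hy : y = (1 / 2 : ℂ) • ((x + y) - (x - y)) := by module
  rw [hy, mulVec_smul, mulVec_sub, hexp_add, hexp_sub, hflip, ← Complex.exp_eq_exp_ℂ]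
  module

theorem complete_graph_minus_edge_pair_lpst_general
    {n : ℕ} (a b : Fin n) (hab : a ≠ b) :
    ∀ q : Fin n, q ≠ a → q ≠ b →
      ∃ γ : ℂ, ‖γ‖ = 1 ∧
        (NormedSpace.exp ((-(Complex.I * ((Real.pi / 2 : ℝ) : ℂ))) •
            ((⊤ : SimpleGraph (Fin n)).lapMatrix ℂ -
              vecMulVec ((Pi.single a 1 : Fin n → ℂ) - Pi.single b 1)
                ((Pi.single a 1 : Fin n → ℂ) - Pi.single b 1)))).mulVec
            ((Pi.single b 1 : Fin n → ℂ) - Pi.single q 1)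
          = γ • ((Pi.single a 1 : Fin n → ℂ) - Pi.single q 1) := by
  intro q hqa hqb
  have hsum (i j : Fin n) : ∑ k, (Pi.single i 1 - Pi.single j 1 : Fin n → ℂ) k = 0 := by simp
  have huu :
      (Pi.single a 1 - Pi.single b 1 : Fin n → ℂ) ⬝ᵥ (Pi.single a 1 - Pi.single b 1) = 2 := by
    simp [dotProduct_sub, hab, hab.symm, one_add_one_eq_two]
  have huw : (Pi.single a 1 - Pi.single b 1 : Fin n → ℂ) ⬝ᵥ
      ((Pi.single a 1 - Pi.single q 1) + (Pi.single b 1 - Pi.single q 1)) = 0 := by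
    simp [dotProduct_sub, dotProduct_add, hab, hab.symm, hqa, hqb]
  refine ⟨Complex.exp (-(I * ((Real.pi / 2 : ℝ) : ℂ)) * n), by simp [norm_exp],
    exp_neg_I_pi_div_two_smul_mulVec_of_eigenvalue_gap ?_ ?_⟩
  · rw [sub_sub_sub_cancel_right, SimpleGraph.lapMatrix_top_sub_vecMulVec_mulVec _ (hsum a b), huu,
      Fintype.card_fin, sub_smul]
  · rw [SimpleGraph.lapMatrix_top_sub_vecMulVec_mulVec _
      (by simp only [Pi.add_apply, Finset.sum_add_distrib, hsum, add_zero]), huw, zero_smul,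
      sub_zero, Fintype.card_fin]

theorem complete_graph_minus_edge_pair_lpst
    {n : ℕ} (hn : 3 ≤ n) (a b : Fin n) (hab : a ≠ b) :
    ∀ q : Fin n, q ≠ a → q ≠ b →
      ∃ γ : ℂ, ‖γ‖ = 1 ∧
        (NormedSpace.exp ((-(Complex.I * ((Real.pi / 2 : ℝ) : ℂ))) •
            ((⊤ : SimpleGraph (Fin n)).lapMatrix ℂ -
              vecMulVec ((Pi.single a 1 : Fin n → ℂ) - Pi.single b 1)
                ((Pi.single a 1 : Fin n → ℂ) - Pi.single b 1)))).mulVec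
            ((Pi.single b 1 : Fin n → ℂ) - Pi.single q 1)
          = γ • ((Pi.single a 1 : Fin n → ℂ) - Pi.single q 1) :=
  complete_graph_minus_edge_pair_lpst_general a b hab
end
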